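/- arXiv:2502.03374 — 4 statements merged into one kernel-verified Lean document; each statement's English description precedes it below -/
import Mathlib

section
/- Let α > 0 and τ > 1, and set ω = α²/(τ²+1)². Then the function u defined by u(x) = e^{√ω x} for x < 0 and u(x) = τ e^{−√ω x} for x > 0 belongs to L²(ℝ), satisfies −u'' + ω u = 0 on ℝ \ {0}, and fulfills u(0⁺) = τ u(0⁻) and u'(0⁻) − τ u'(0⁺) = α u(0⁻). Moreover, ω = α²/(τ²+1)² is the unique ω > 0 for which a nonzero solution of this form exists. -/
open MeasureTheory Filter Set Topology

/-! On each half-line `u` is a multiple of `exp (∓√ω x)`, so it decays exponentially, hence lies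
in `L²`, and solves `u'' = ω u` there; its one-sided values at `0` are read off by continuity.
For this ansatz the jump condition `u'(0⁻) - τ u'(0⁺) = α u(0⁻)` reads `√ω (1 + τ²) = α`, and
for `ω ≥ 0` this pins down `ω = α² / (τ² + 1)²`. -/

theorem hasDerivAt_exp_mul (a x : ℝ) :
    HasDerivAt (fun y => Real.exp (a * y)) (a * Real.exp (a * x)) x := by
  simpa [mul_comm] using ((hasDerivAt_id x).const_mul a).exp

open Real in
theorem memLp_exp_mul_of_integrableOn {a : ℝ} {p : ENNReal} {s : Set ℝ} (hp₀ : p ≠ 0)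
    (hp : p ≠ ⊤) (h : IntegrableOn (fun x => exp (p.toReal * a * x)) s) :
    MemLp (fun x => exp (a * x)) p (volume.restrict s) := by
  have hmeas : AEStronglyMeasurable (fun x => exp (a * x)) (volume.restrict s) :=
    (by fun_prop : Continuous fun x => exp (a * x)).aestronglyMeasurable
  refine (integrable_norm_rpow_iff hmeas hp₀ hp).1 ?_
  have hpow : (fun x => ‖exp (a * x)‖ ^ p.toReal) = fun x => exp (p.toReal * a * x) := by
    ext x
    rw [norm_of_nonneg (exp_pos _).le, ← exp_mul]
    ring_nf
  rwa [hpow]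

theorem sqrt_mul_eq_iff_eq_sq_div {ω a c : ℝ} (hω : 0 ≤ ω) (ha : 0 ≤ a) (hc : 0 < c) :
    √ω * c = a ↔ ω = a ^ 2 / c ^ 2 := by
  rw [← div_pow, ← Real.sqrt_eq_iff_eq_sq hω (by positivity), eq_div_iff hc.ne']

section
variable {X : Type*} {f g : ℝ → X} {c : ℝ}

theorem ite_lt_eventuallyEq_nhdsLT : (fun y => if y < c then f y else g y) =ᶠ[𝓝[<] c] f :=
  eventually_mem_nhdsWithin.mono fun _ hy => if_pos hy

theorem ite_lt_eventuallyEq_nhdsGT : (fun y => if y < c then f y else g y) =ᶠ[𝓝[>] c] g :=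
  eventually_mem_nhdsWithin.mono fun _ hy => if_neg (not_lt.2 hy.le)

variable [TopologicalSpace X] {l : X}

theorem tendsto_ite_lt_nhdsLT (hf : ContinuousAt f c) (hl : f c = l) :
    Tendsto (fun y => if y < c then f y else g y) (𝓝[<] c) (𝓝 l) :=
  (hl ▸ hf.tendsto.mono_left nhdsWithin_le_nhds).congr' ite_lt_eventuallyEq_nhdsLT.symm

theorem tendsto_ite_lt_nhdsGT (hg : ContinuousAt g c) (hl : g c = l) :
    Tendsto (fun y => if y < c then f y else g y) (𝓝[>] c) (𝓝 l) :=
  (hl ▸ hg.tendsto.mono_left nhdsWithin_le_nhds).congr' ite_lt_eventuallyEq_nhdsGT.symm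

end

theorem HasDerivAt.ite_lt {F : Type*} [NormedAddCommGroup F] [NormedSpace ℝ F] {f g : ℝ → F}
    {a b : F} {c x : ℝ} (hf : HasDerivAt f a x) (hg : HasDerivAt g b x) (hx : x ≠ c) :
    HasDerivAt (fun y => if y < c then f y else g y) (if x < c then a else b) x := by
  rcases hx.lt_or_gt with hlt | hgt
  · rw [if_pos hlt]
    exact hf.congr_of_eventuallyEq ((eventually_lt_nhds hlt).mono fun y hy => if_pos hy)
  · rw [if_neg (not_lt.2 hgt.le)]
    exact hg.congr_of_eventuallyEq
      ((eventually_gt_nhds hgt).mono fun y hy => if_neg (not_lt.2 hy.le))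

theorem stmt5_general (α τ : ℝ) (hα : 0 < α) :
    let ω : ℝ := α ^ 2 / (τ ^ 2 + 1) ^ 2
    let u : ℝ → ℝ := fun x =>
      if x < 0 then Real.exp (Real.sqrt ω * x) else τ * Real.exp (-(Real.sqrt ω) * x)
    let du : ℝ → ℝ := fun x =>
      if x < 0 then Real.sqrt ω * Real.exp (Real.sqrt ω * x)
      else -(τ * Real.sqrt ω) * Real.exp (-(Real.sqrt ω) * x)
    -- u ∈ L²(ℝ)
    MemLp u 2 volume ∧
    -- −u'' + ω u = 0 on ℝ \ {0}, i.e. u'' = ω u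
    (∀ x : ℝ, x ≠ 0 → HasDerivAt u (du x) x) ∧
    (∀ x : ℝ, x ≠ 0 → HasDerivAt du (ω * u x) x) ∧
    -- one-sided limits and the jump conditions u(0⁺) = τ u(0⁻),
    -- u'(0⁻) − τ u'(0⁺) = α u(0⁻)
    Tendsto u (𝓝[<] 0) (𝓝 1) ∧ Tendsto u (𝓝[>] 0) (𝓝 τ) ∧ τ = τ * 1 ∧
    Tendsto du (𝓝[<] 0) (𝓝 (Real.sqrt ω)) ∧
    Tendsto du (𝓝[>] 0) (𝓝 (-(τ * Real.sqrt ω))) ∧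
    Real.sqrt ω - τ * (-(τ * Real.sqrt ω)) = α * 1 ∧
    -- uniqueness: ω = α²/(τ²+1)² is the only positive frequency for which a
    -- nonzero solution of this exponential form fulfills the jump condition
    (∀ ω' : ℝ, 0 < ω' →
      Real.sqrt ω' - τ * (-(τ * Real.sqrt ω')) = α * 1 →
      ω' = α ^ 2 / (τ ^ 2 + 1) ^ 2) := by
  intro ω u du
  have hω : 0 < ω := by positivity
  have hjump {ω' : ℝ} (hω' : 0 ≤ ω') : √ω' - τ * (-(τ * √ω')) = α * 1 ↔ ω' = ω := by
    rw [← sqrt_mul_eq_iff_eq_sq_div hω' hα.le (by positivity)]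
    constructor <;> intro h <;> linear_combination h
  refine ⟨?_, fun x hx => ?_, fun x hx => ?_, tendsto_ite_lt_nhdsLT (by fun_prop) (by simp),
    tendsto_ite_lt_nhdsGT (by fun_prop) (by simp), (mul_one τ).symm,
    tendsto_ite_lt_nhdsLT (by fun_prop) (by simp), tendsto_ite_lt_nhdsGT (by fun_prop) (by simp),
    (hjump hω.le).2 rfl, fun ω' hω' h => (hjump hω'.le).1 h⟩
  · refine MemLp.piecewise (s := Iio 0) measurableSet_Iio ?_ ?_
    · rw [restrict_Iio_eq_restrict_Iic]
      exact memLp_exp_mul_of_integrableOn two_ne_zero ENNReal.ofNat_ne_top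
        (integrableOn_exp_mul_Iic (by simpa using hω) 0)
    · rw [compl_Iio, ← restrict_Ioi_eq_restrict_Ici]
      exact (memLp_exp_mul_of_integrableOn two_ne_zero ENNReal.ofNat_ne_top
        (integrableOn_exp_mul_Ioi (by simpa using hω) 0)).const_mul τ
  · exact (hasDerivAt_exp_mul √ω x).ite_lt
      (((hasDerivAt_exp_mul (-√ω) x).const_mul τ).congr_deriv (by ring)) hx
  · refine (((hasDerivAt_exp_mul √ω x).const_mul √ω).ite_lt
      ((hasDerivAt_exp_mul (-√ω) x).const_mul (-(τ * √ω))) hx).congr_deriv ?_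
    simp only [u]
    split_ifs
    · linear_combination Real.exp (√ω * x) * Real.mul_self_sqrt hω.le
    · linear_combination τ * Real.exp (-√ω * x) * Real.mul_self_sqrt hω.le

theorem stmt5 (α τ : ℝ) (hα : 0 < α) (hτ : 1 < τ) :
    let ω : ℝ := α ^ 2 / (τ ^ 2 + 1) ^ 2
    let u : ℝ → ℝ := fun x =>
      if x < 0 then Real.exp (Real.sqrt ω * x) else τ * Real.exp (-(Real.sqrt ω) * x)
    let du : ℝ → ℝ := fun x =>
      if x < 0 then Real.sqrt ω * Real.exp (Real.sqrt ω * x)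
      else -(τ * Real.sqrt ω) * Real.exp (-(Real.sqrt ω) * x)
    -- u ∈ L²(ℝ)
    MemLp u 2 volume ∧
    -- −u'' + ω u = 0 on ℝ \ {0}, i.e. u'' = ω u
    (∀ x : ℝ, x ≠ 0 → HasDerivAt u (du x) x) ∧
    (∀ x : ℝ, x ≠ 0 → HasDerivAt du (ω * u x) x) ∧
    -- one-sided limits and the jump conditions u(0⁺) = τ u(0⁻),
    -- u'(0⁻) − τ u'(0⁺) = α u(0⁻)
    Tendsto u (𝓝[<] 0) (𝓝 1) ∧ Tendsto u (𝓝[>] 0) (𝓝 τ) ∧ τ = τ * 1 ∧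
    Tendsto du (𝓝[<] 0) (𝓝 (Real.sqrt ω)) ∧
    Tendsto du (𝓝[>] 0) (𝓝 (-(τ * Real.sqrt ω))) ∧
    Real.sqrt ω - τ * (-(τ * Real.sqrt ω)) = α * 1 ∧
    -- uniqueness: ω = α²/(τ²+1)² is the only positive frequency for which a
    -- nonzero solution of this exponential form fulfills the jump condition
    (∀ ω' : ℝ, 0 < ω' →
      Real.sqrt ω' - τ * (-(τ * Real.sqrt ω')) = α * 1 →
      ω' = α ^ 2 / (τ ^ 2 + 1) ^ 2) :=
  stmt5_general α τ hα
end

section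
/- Let σ > 0, τ > 1, α > 0 and define T₋^L(ω) = (1/(τ^{2σ+4}−1)) ( α/√ω − τ² √( (α²/ω) τ^{2σ} + (τ^{2σ+4}−1)(τ^{2σ}−1) ) ). Then T₋^L(ω) ∈ (−1, 1) if and only if ω > α²/(τ²+1)². -/
open Set

theorem stmt8 (σ τ α : ℝ) (hσ : 0 < σ) (hτ : 1 < τ) (hα : 0 < α) :
    ∀ ω : ℝ, 0 < ω →
      ((1 / (τ ^ (2 * σ + 4) - 1)) *
          (α / Real.sqrt ω - τ ^ 2 * Real.sqrt ((α ^ 2 / ω) * τ ^ (2 * σ)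
              + (τ ^ (2 * σ + 4) - 1) * (τ ^ (2 * σ) - 1))) ∈ Ioo (-1 : ℝ) 1
        ↔ ω > α ^ 2 / (τ ^ 2 + 1) ^ 2) := by
  intro ω hω
  have hτ0 : (0:ℝ) < τ := by linarith
  set w := Real.sqrt ω with hwdef
  have hw : 0 < w := Real.sqrt_pos.mpr hω
  have hw2 : w ^ 2 = ω := Real.sq_sqrt hω.le
  set s := α / w with hsdef
  have hs : 0 < s := div_pos hα hw
  have e1 : α ^ 2 / ω = s ^ 2 := by
    rw [hsdef, div_pow, hw2]
  set p := τ ^ (2 * σ) with hpdef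
  have hp : 1 < p := Real.one_lt_rpow_iff_of_pos hτ0 |>.mpr (Or.inl ⟨hτ, by linarith⟩)
  set t := τ ^ 2 with htdef
  have ht : 1 < t := by nlinarith
  have e2 : τ ^ (2 * σ + 4) = p * t ^ 2 := by
    rw [hpdef, Real.rpow_add hτ0]
    congr 1
    rw [htdef, show (4:ℝ) = ((4:ℕ):ℝ) by norm_num, Real.rpow_natCast]
    ring
  rw [e1, e2]
  set A := p * t ^ 2 - 1 with hAdef
  have hA : 0 < A := by nlinarith
  set D := s ^ 2 * p + A * (p - 1) with hDdef
  have hD0 : 0 ≤ D := by nlinarith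
  set r := Real.sqrt D with hrdef
  have hr0 : 0 ≤ r := Real.sqrt_nonneg D
  have hr2 : r ^ 2 = D := Real.sq_sqrt hD0
  have hrs : s < r := by
    rw [hrdef]
    rw [show s = Real.sqrt (s ^ 2) by rw [Real.sqrt_sq hs.le]]
    apply Real.sqrt_lt_sqrt (by positivity)
    nlinarith
  clear_value r D A t p s w
  have id1 : t ^ 2 * D - (s + A) ^ 2 = A * ((s - 1) ^ 2 - t ^ 2) := by
    rw [hDdef, hAdef]; ring
  have idw : ((t + 1) * w) ^ 2 = (t + 1) ^ 2 * ω := by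
    rw [mul_pow, hw2]
  have htrD : (t * r) ^ 2 = t ^ 2 * D := by
    rw [mul_pow, hr2]
  have htr0 : 0 ≤ t * r := mul_nonneg (by linarith) hr0
  -- upper bound always holds
  have hupper : (1 / A) * (s - t * r) < 1 := by
    have hr' : r < t * r := (lt_mul_iff_one_lt_left (by linarith : (0:ℝ) < r)).mpr ht
    have hneg : s - t * r < 0 := by linarith
    have := mul_neg_of_pos_of_neg (one_div_pos.mpr hA) hneg
    linarith
  constructor
  · rintro ⟨h1, _⟩
    have h2 : t * r < s + A := by
      have := (lt_div_iff₀ hA).mp (by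
        rw [div_eq_mul_one_div, mul_comm]
        exact h1 : (-1:ℝ) < (s - t * r) / A)
      linarith
    have h3 : t ^ 2 * D < (s + A) ^ 2 := by
      have hm := mul_self_lt_mul_self htr0 h2
      calc t ^ 2 * D = (t * r) * (t * r) := by rw [← htrD]; ring
        _ < (s + A) * (s + A) := hm
        _ = (s + A) ^ 2 := by ring
    have hsq : (s - 1) ^ 2 < t ^ 2 := by
      by_contra hcon
      push_neg at hcon
      have : 0 ≤ A * ((s - 1) ^ 2 - t ^ 2) := mul_nonneg hA.le (by linarith)
      linarith
    have h4 : s < t + 1 := by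
      by_contra hcon
      push_neg at hcon
      have h' : t ≤ s - 1 := by linarith
      have : t ^ 2 ≤ (s - 1) ^ 2 := by
        rw [pow_two, pow_two]
        exact mul_le_mul h' h' (by linarith) (by linarith)
      linarith
    have h5 : α < (t + 1) * w := by
      rw [hsdef] at h4
      exact (div_lt_iff₀ hw).mp h4
    have h6 := mul_self_lt_mul_self hα.le h5
    rw [gt_iff_lt, div_lt_iff₀ (by positivity : (0:ℝ) < (t + 1) ^ 2)]
    have e : ((t + 1) * w) * ((t + 1) * w) = (t + 1) ^ 2 * ω := by rw [← idw]; ring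
    have e' : α * α = α ^ 2 := by ring
    linarith [e ▸ e' ▸ h6]
  · intro h
    refine ⟨?_, hupper⟩
    have h5 : α ^ 2 < ω * (t + 1) ^ 2 :=
      (div_lt_iff₀ (by positivity : (0:ℝ) < (t + 1) ^ 2)).mp h
    have h4 : s < t + 1 := by
      rw [hsdef, div_lt_iff₀ hw]
      by_contra hcon
      push_neg at hcon
      have := mul_self_le_mul_self (by positivity : (0:ℝ) ≤ (t + 1) * w) hcon
      have e : ((t + 1) * w) * ((t + 1) * w) = (t + 1) ^ 2 * ω := by rw [← idw]; ring
      have e' : α * α = α ^ 2 := by ring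
      linarith [e ▸ e' ▸ this]
    have hsq : (s - 1) ^ 2 < t ^ 2 := sq_lt_sq' (by linarith) (by linarith)
    have h3 : t ^ 2 * D < (s + A) ^ 2 := by
      have : A * ((s - 1) ^ 2 - t ^ 2) < 0 :=
        mul_neg_of_pos_of_neg hA (by linarith)
      linarith
    have h2 : t * r < s + A := by
      by_contra hcon
      push_neg at hcon
      have hm := mul_self_le_mul_self (by linarith : (0:ℝ) ≤ s + A) hcon
      have e : (t * r) * (t * r) = t ^ 2 * D := by rw [← htrD]; ring
      have e' : (s + A) * (s + A) = (s + A) ^ 2 := by ring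
      linarith [e ▸ e' ▸ hm]
    have hlt : -A < s - t * r := by linarith
    have := mul_lt_mul_of_pos_left hlt (one_div_pos.mpr hA)
    have hAi : (1 / A) * (-A) = -1 := by field_simp
    linarith [hAi ▸ this]
end

section
/- Let σ > 0, τ > 1, α > 0 and define T₋^R(ω) = (1/(τ^{2σ+4}−1)) ( α/√ω + τ² √( (α²/ω) τ^{2σ} + (τ^{2σ+4}−1)(τ^{2σ}−1) ) ). Then T₋^R(ω) ∈ (−1, 1) if and only if ω > α²/(τ²−1)². -/
open Set
set_option maxHeartbeats 1000000

theorem stmt9 (σ τ α : ℝ) (hσ : 0 < σ) (hτ : 1 < τ) (hα : 0 < α) :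
    ∀ ω : ℝ, 0 < ω →
      ((1 / (τ ^ (2 * σ + 4) - 1)) *
          (α / Real.sqrt ω + τ ^ 2 * Real.sqrt ((α ^ 2 / ω) * τ ^ (2 * σ)
              + (τ ^ (2 * σ + 4) - 1) * (τ ^ (2 * σ) - 1))) ∈ Ioo (-1 : ℝ) 1
        ↔ ω > α ^ 2 / (τ ^ 2 - 1) ^ 2) := by
  intro ω hω
  have hτ0 : (0:ℝ) < τ := lt_trans one_pos hτ
  have hw : 0 < Real.sqrt ω := Real.sqrt_pos.mpr hω
  set w := Real.sqrt ω with hwdef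
  have hw2 : w ^ 2 = ω := Real.sq_sqrt hω.le
  set s := τ ^ (2 * σ) with hsdef
  have hs1 : 1 < s := (Real.one_lt_rpow_iff_of_pos hτ0).mpr (Or.inl ⟨hτ, by positivity⟩)
  have hst : τ ^ (2 * σ + 4) = s * τ ^ (4:ℕ) := by
    rw [hsdef, ← Real.rpow_natCast τ 4, ← Real.rpow_add hτ0]
    norm_num
  have ht1 : (1:ℝ) < τ ^ (4:ℕ) := one_lt_pow₀ hτ (by norm_num)
  have hτ2 : (1:ℝ) < τ ^ (2:ℕ) := one_lt_pow₀ hτ (by norm_num)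
  have hD : 0 < s * τ ^ (4:ℕ) - 1 := by nlinarith
  rw [hst]
  set a := α / w with hadef
  have ha : 0 < a := div_pos hα hw
  have hq : α ^ 2 / ω = a ^ 2 := by rw [hadef, div_pow, hw2]
  rw [hq]
  have hQ0 : 0 ≤ a ^ 2 * s + (s * τ ^ (4:ℕ) - 1) * (s - 1) := by
    nlinarith [sq_nonneg a]
  set r := Real.sqrt (a ^ 2 * s + (s * τ ^ (4:ℕ) - 1) * (s - 1)) with hrdef
  have hr0 : 0 ≤ r := Real.sqrt_nonneg _
  have hr2 : r ^ 2 = a ^ 2 * s + (s * τ ^ (4:ℕ) - 1) * (s - 1) := Real.sq_sqrt hQ0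
  have hc : 0 < τ ^ (2:ℕ) - 1 := by linarith
  have hrr : (τ ^ (2:ℕ) * r) ^ 2
      = τ ^ (4:ℕ) * (a ^ 2 * s + (s * τ ^ (4:ℕ) - 1) * (s - 1)) := by
    rw [mul_pow, hr2]; ring
  -- key algebraic identity
  have hid : τ ^ (4:ℕ) * (a ^ 2 * s + (s * τ ^ (4:ℕ) - 1) * (s - 1))
      - (s * τ ^ (4:ℕ) - 1 - a) ^ 2
      = (s * τ ^ (4:ℕ) - 1) * ((a + 1) ^ 2 - τ ^ (4:ℕ)) := by ring
  -- a < τ^2 - 1  ↔  ω > α^2/(τ^2-1)^2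
  have key : a < τ ^ (2:ℕ) - 1 ↔ ω > α ^ 2 / (τ ^ (2:ℕ) - 1) ^ 2 := by
    rw [hadef, div_lt_iff₀ hw, gt_iff_lt, div_lt_iff₀ (by positivity)]
    constructor
    · intro h
      nlinarith [mul_self_lt_mul_self hα.le h, hw2]
    · intro h
      by_contra hcon
      push_neg at hcon
      have hp : 0 < (τ ^ (2:ℕ) - 1) * w := mul_pos hc hw
      nlinarith [mul_self_le_mul_self hp.le hcon, hw2]
  constructor
  · rintro ⟨-, h1⟩
    rw [one_div_mul_eq_div, div_lt_one hD] at h1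
    have h2 : τ ^ (2:ℕ) * r < s * τ ^ (4:ℕ) - 1 - a := by linarith
    have hDa : 0 < s * τ ^ (4:ℕ) - 1 - a := lt_of_le_of_lt (by positivity) h2
    have h3 : (τ ^ (2:ℕ) * r) ^ 2 < (s * τ ^ (4:ℕ) - 1 - a) ^ 2 := by
      nlinarith [mul_self_lt_mul_self (by positivity : (0:ℝ) ≤ τ ^ (2:ℕ) * r) h2]
    have h7 : (s * τ ^ (4:ℕ) - 1) * ((a + 1) ^ 2 - τ ^ (4:ℕ)) < 0 := by
      rw [← hid]; rw [hrr] at h3; linarith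
    have h5 : (a + 1) ^ 2 < τ ^ (4:ℕ) := by
      by_contra hcon
      push_neg at hcon
      nlinarith [mul_nonneg hD.le (by linarith : (0:ℝ) ≤ (a + 1) ^ 2 - τ ^ (4:ℕ))]
    have hsum : (0:ℝ) < a + 1 + τ ^ (2:ℕ) := by linarith
    have h6 : a < τ ^ (2:ℕ) - 1 := by nlinarith [h5, hsum]
    exact key.mp h6
  · intro hω'
    have h6 : a < τ ^ (2:ℕ) - 1 := key.mpr hω'
    have h5 : (a + 1) ^ 2 < τ ^ (4:ℕ) := by
      nlinarith [mul_self_lt_mul_self (by linarith : (0:ℝ) ≤ a + 1)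
        (by linarith : a + 1 < τ ^ (2:ℕ))]
    have h7 : (s * τ ^ (4:ℕ) - 1) * ((a + 1) ^ 2 - τ ^ (4:ℕ)) < 0 :=
      mul_neg_of_pos_of_neg hD (by linarith)
    have h3 : (τ ^ (2:ℕ) * r) ^ 2 < (s * τ ^ (4:ℕ) - 1 - a) ^ 2 := by
      rw [hrr]; nlinarith [hid, h7]
    have hDa : 0 < s * τ ^ (4:ℕ) - 1 - a := by nlinarith
    have h2 : τ ^ (2:ℕ) * r < s * τ ^ (4:ℕ) - 1 - a := by
      nlinarith [h3, sq_nonneg (τ ^ (2:ℕ) * r + (s * τ ^ (4:ℕ) - 1 - a)),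
        mul_nonneg (by positivity : (0:ℝ) ≤ τ ^ (2:ℕ) * r) hDa.le]
    constructor
    · have hnn : (0:ℝ) ≤ τ ^ (2:ℕ) * r := by positivity
      have hpos : 0 < 1 / (s * τ ^ (4:ℕ) - 1) * (a + τ ^ (2:ℕ) * r) :=
        mul_pos (by positivity) (by linarith)
      linarith
    · rw [one_div_mul_eq_div, div_lt_one hD]
      linarith
end

section
/- Let σ > 0, τ > 1, α > 0, ω > 0. Then the derivative of T₋^L(ω) = (1/(τ^{2σ+4}−1)) ( α ω^{−1/2} − τ² √( α² τ^{2σ} ω^{−1} + (τ^{2σ+4}−1)(τ^{2σ}−1) ) ) with respect to ω equals −(α/(2ω^{3/2}(τ^{2σ+4}−1))) (1 − α τ^{2σ+2}/√( α² τ^{2σ} + (τ^{2σ+4}−1)(τ^{2σ}−1) ω )), and one has 2 ω^{3/2} (T₋^L)'(ω) + α/(τ^{2σ}−1) > 0. -/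
theorem stmt10 (σ τ α ω : ℝ) (hσ : 0 < σ) (hτ : 1 < τ) (hα : 0 < α) (hω : 0 < ω) :
    let TmL : ℝ → ℝ := fun w =>
      (1 / (τ ^ (2 * σ + 4) - 1)) *
        (α * w ^ (-(1 : ℝ) / 2)
          - τ ^ 2 * Real.sqrt (α ^ 2 * τ ^ (2 * σ) * w⁻¹
              + (τ ^ (2 * σ + 4) - 1) * (τ ^ (2 * σ) - 1)))
    let D : ℝ :=
      -(α / (2 * ω ^ ((3 : ℝ) / 2) * (τ ^ (2 * σ + 4) - 1))) *
        (1 - α * τ ^ (2 * σ + 2) / Real.sqrt (α ^ 2 * τ ^ (2 * σ)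
            + (τ ^ (2 * σ + 4) - 1) * (τ ^ (2 * σ) - 1) * ω))
    HasDerivAt TmL D ω ∧ 2 * ω ^ ((3 : ℝ) / 2) * D + α / (τ ^ (2 * σ) - 1) > 0 := by
  intro TmL D
  have hτ0 : (0:ℝ) < τ := lt_trans one_pos hτ
  have hs1 : 1 < τ ^ (2*σ) :=
    (Real.one_lt_rpow_iff_of_pos hτ0).mpr (Or.inl ⟨hτ, by positivity⟩)
  have hP1 : 1 < τ ^ (2*σ+4) :=
    (Real.one_lt_rpow_iff_of_pos hτ0).mpr (Or.inl ⟨hτ, by positivity⟩)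
  have hQ : (0:ℝ) < τ ^ (2*σ) - 1 := by linarith
  have hP : (0:ℝ) < τ ^ (2*σ+4) - 1 := by linarith
  have hts : (0:ℝ) < τ ^ (2*σ) := Real.rpow_pos_of_pos hτ0 _
  have harg : (0:ℝ) < α ^ 2 * τ ^ (2*σ) + (τ ^ (2*σ+4) - 1) * (τ ^ (2*σ) - 1) * ω := by
    positivity
  set S := Real.sqrt (α ^ 2 * τ ^ (2*σ) + (τ ^ (2*σ+4) - 1) * (τ ^ (2*σ) - 1) * ω) with hSdef
  have hS : 0 < S := Real.sqrt_pos.mpr harg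
  set r := Real.sqrt ω with hrdef
  have hr : 0 < r := Real.sqrt_pos.mpr hω
  have hrr : r * r = ω := Real.mul_self_sqrt hω.le
  -- key sqrt identity
  have hkey : Real.sqrt (α ^ 2 * τ ^ (2*σ) * ω⁻¹ + (τ ^ (2*σ+4) - 1) * (τ ^ (2*σ) - 1))
      = S / r := by
    rw [show α ^ 2 * τ ^ (2*σ) * ω⁻¹ + (τ ^ (2*σ+4) - 1) * (τ ^ (2*σ) - 1)
        = (α ^ 2 * τ ^ (2*σ) + (τ ^ (2*σ+4) - 1) * (τ ^ (2*σ) - 1) * ω) / ω by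
      field_simp]
    rw [Real.sqrt_div harg.le, hSdef, hrdef]
  have h32 : ω ^ ((3:ℝ)/2) = ω * r := by
    rw [show (3:ℝ)/2 = 1 + 1/2 by norm_num, Real.rpow_add hω, Real.rpow_one,
      hrdef, Real.sqrt_eq_rpow]
  have h22 : τ ^ (2*σ+2) = τ ^ (2*σ) * τ ^ 2 := by
    rw [Real.rpow_add hτ0, Real.rpow_two]
  -- derivative
  have hne : α ^ 2 * τ ^ (2*σ) * ω⁻¹ + (τ ^ (2*σ+4) - 1) * (τ ^ (2*σ) - 1) ≠ 0 := by
    positivity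
  have hd1 : HasDerivAt (fun w : ℝ => w ^ (-(1:ℝ)/2)) ((-(1:ℝ)/2) * ω ^ ((-(1:ℝ)/2) - 1)) ω :=
    Real.hasDerivAt_rpow_const (Or.inl hω.ne')
  have hd2 : HasDerivAt (fun w : ℝ => w⁻¹) (-(ω^2)⁻¹) ω := hasDerivAt_inv hω.ne'
  have hd3 : HasDerivAt
      (fun w : ℝ => α ^ 2 * τ ^ (2*σ) * w⁻¹ + (τ ^ (2*σ+4) - 1) * (τ ^ (2*σ) - 1))
      (α ^ 2 * τ ^ (2*σ) * -(ω^2)⁻¹) ω := (hd2.const_mul _).add_const _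
  have hd4 := hd3.sqrt hne
  have hd5 : HasDerivAt TmL
      ((1 / (τ ^ (2*σ+4) - 1)) *
        (α * ((-(1:ℝ)/2) * ω ^ ((-(1:ℝ)/2) - 1))
          - τ ^ 2 * (α ^ 2 * τ ^ (2*σ) * -(ω^2)⁻¹ /
              (2 * Real.sqrt (α ^ 2 * τ ^ (2*σ) * ω⁻¹
                + (τ ^ (2*σ+4) - 1) * (τ ^ (2*σ) - 1)))))) ω :=
    ((hd1.const_mul α).sub (hd4.const_mul (τ^2))).const_mul _
  have hDeq : D = (1 / (τ ^ (2*σ+4) - 1)) *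
        (α * ((-(1:ℝ)/2) * ω ^ ((-(1:ℝ)/2) - 1))
          - τ ^ 2 * (α ^ 2 * τ ^ (2*σ) * -(ω^2)⁻¹ /
              (2 * Real.sqrt (α ^ 2 * τ ^ (2*σ) * ω⁻¹
                + (τ ^ (2*σ+4) - 1) * (τ ^ (2*σ) - 1))))) := by
    have hm32 : ω ^ ((-(1:ℝ)/2) - 1) = (ω * r)⁻¹ := by
      rw [show (-(1:ℝ)/2) - 1 = -((3:ℝ)/2) by norm_num, Real.rpow_neg hω.le, h32]
    show D = _
    rw [hkey, hm32]
    show -(α / (2 * ω ^ ((3:ℝ)/2) * (τ ^ (2*σ+4) - 1))) * (1 - α * τ ^ (2*σ+2) / S) = _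
    rw [h32, h22, ← hrr]
    field_simp
    ring
  constructor
  · exact hDeq ▸ hd5
  · have hω32 : (0:ℝ) < ω ^ ((3:ℝ)/2) := Real.rpow_pos_of_pos hω _
    have e : 2 * ω ^ ((3:ℝ)/2) * D + α / (τ ^ (2*σ) - 1)
        = (α / (τ ^ (2*σ) - 1) - α / (τ ^ (2*σ+4) - 1))
          + α * (α * τ ^ (2*σ+2)) / ((τ ^ (2*σ+4) - 1) * S) := by
      show 2 * ω ^ ((3:ℝ)/2) *
        (-(α / (2 * ω ^ ((3:ℝ)/2) * (τ ^ (2*σ+4) - 1))) * (1 - α * τ ^ (2*σ+2) / S)) + _ = _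
      field_simp
      ring
    rw [e]
    have h1 : α / (τ ^ (2*σ+4) - 1) < α / (τ ^ (2*σ) - 1) := by
      apply div_lt_div_of_pos_left hα hQ
      have : τ ^ (2*σ) < τ ^ (2*σ+4) :=
        (Real.rpow_lt_rpow_left_iff hτ).mpr (by linarith)
      linarith
    have h2 : (0:ℝ) < α * (α * τ ^ (2*σ+2)) / ((τ ^ (2*σ+4) - 1) * S) := by
      have : (0:ℝ) < τ ^ (2*σ+2) := Real.rpow_pos_of_pos hτ0 _
      positivity
    linarith
end
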